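/- arXiv:2011.14891 — 2 statements merged into one kernel-verified Lean document; each statement's English description precedes it below -/
import Mathlib

section
/- Let J ∈ M₃(ℝ) with special singular value decomposition J = P D Q, where P, Q ∈ SO₃(ℝ) and D = diag(d₁,d₂,d₃) with d₁ ⩾ d₂ ⩾ |d₃|. Then the minimum of ∥J − A∥ over A ∈ SO₃(ℝ) is attained at A = PQ and equals ∥D − I₃∥, where ∥·∥ is the norm associated to the inner product A·B = ½Tr(ABᵀ) on M₃(ℝ). -/
open Matrix

/-- The space of `3 × 3` real matrices. -/
abbrev Mat3 := Matrix (Fin 3) (Fin 3) ℝ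

/-- `SO₃(ℝ)`: real `3 × 3` matrices with `AᵀA = I₃` and `det A = 1`. -/
def SO3 : Set Mat3 := {A | Aᵀ * A = 1 ∧ A.det = 1}

/-- The inner product `A·B = ½ Tr(ABᵀ)` on `M₃(ℝ)`. -/
noncomputable def mdot (A B : Mat3) : ℝ := (1 / 2) * (A * Bᵀ).trace

/-- The norm associated to the inner product `A·B = ½ Tr(ABᵀ)` on `M₃(ℝ)`. -/
noncomputable def mnorm (A : Mat3) : ℝ := Real.sqrt (mdot A A)

lemma SO3_mul' {A B : Mat3} (hA : A ∈ SO3) (hB : B ∈ SO3) : A * B ∈ SO3 := by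
  obtain ⟨hA1, hA2⟩ := hA; obtain ⟨hB1, hB2⟩ := hB
  constructor
  · rw [transpose_mul]
    calc Bᵀ * Aᵀ * (A * B) = Bᵀ * (Aᵀ * A) * B := by noncomm_ring
    _ = 1 := by rw [hA1, mul_one, hB1]
  · rw [det_mul, hA2, hB2, mul_one]

lemma SO3_transpose' {A : Mat3} (hA : A ∈ SO3) : Aᵀ ∈ SO3 := by
  obtain ⟨hA1, hA2⟩ := hA
  exact ⟨by rw [transpose_transpose]; exact mul_eq_one_comm.mp hA1,
    by rw [det_transpose]; exact hA2⟩

lemma SO3_mul_transpose' {A : Mat3} (hA : A ∈ SO3) : A * Aᵀ = 1 :=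
  mul_eq_one_comm.mp hA.1

/-- The trace of a rotation matrix is at least `-1`. -/
lemma SO3_trace_ge_neg_one (R : Mat3) (hR : R ∈ SO3) : -1 ≤ R.trace := by
  obtain ⟨h1, h2⟩ := hR
  have hadj : Rᵀ = R.adjugate := by
    calc Rᵀ = Rᵀ * (R * R.adjugate) := by rw [Matrix.mul_adjugate, h2]; simp
    _ = (Rᵀ * R) * R.adjugate := by rw [mul_assoc]
    _ = R.adjugate := by rw [h1, one_mul]
  have e00 : R 0 0 = R 1 1 * R 2 2 - R 1 2 * R 2 1 := by
    have := congrFun (congrFun hadj 0) 0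
    simp [Matrix.adjugate_fin_three] at this; linarith
  have e11 : R 1 1 = R 0 0 * R 2 2 - R 0 2 * R 2 0 := by
    have := congrFun (congrFun hadj 1) 1
    simp [Matrix.adjugate_fin_three] at this; linarith
  have e22 : R 2 2 = R 0 0 * R 1 1 - R 0 1 * R 1 0 := by
    have := congrFun (congrFun hadj 2) 2
    simp [Matrix.adjugate_fin_three] at this; linarith
  have c0 : R 0 0 * R 0 0 + R 1 0 * R 1 0 + R 2 0 * R 2 0 = 1 := by
    have := congrFun (congrFun h1 0) 0
    simp [Matrix.mul_apply, Fin.sum_univ_three] at this; linarith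
  have c1 : R 0 1 * R 0 1 + R 1 1 * R 1 1 + R 2 1 * R 2 1 = 1 := by
    have := congrFun (congrFun h1 1) 1
    simp [Matrix.mul_apply, Fin.sum_univ_three] at this; linarith
  have c2 : R 0 2 * R 0 2 + R 1 2 * R 1 2 + R 2 2 * R 2 2 = 1 := by
    have := congrFun (congrFun h1 2) 2
    simp [Matrix.mul_apply, Fin.sum_univ_three] at this; linarith
  have ht : R.trace = R 0 0 + R 1 1 + R 2 2 := by
    simp [Matrix.trace, Fin.sum_univ_three]
  set t := R 0 0 + R 1 1 + R 2 2 with htdef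
  have key : (3 - t) * (1 + t) =
      (R 1 2 - R 2 1)^2 + (R 0 2 - R 2 0)^2 + (R 0 1 - R 1 0)^2 := by
    rw [htdef]; linear_combination -c0 - c1 - c2 + 2*e00 + 2*e11 + 2*e22
  have h3 : t ≤ 3 := by
    nlinarith [c0, c1, c2, sq_nonneg (R 0 0 - 1), sq_nonneg (R 1 1 - 1), sq_nonneg (R 2 2 - 1)]
  rw [ht]
  nlinarith [key, sq_nonneg (R 1 2 - R 2 1), sq_nonneg (R 0 2 - R 2 0),
    sq_nonneg (R 0 1 - R 1 0), h3]

/-- Diagonal entries of a rotation matrix are at most `1`. -/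
lemma SO3_diag_le_one (R : Mat3) (hR : R ∈ SO3) (i : Fin 3) : R i i ≤ 1 := by
  have h := congrFun (congrFun hR.1 i) i
  have h' : (∑ j, R j i * R j i) = 1 := by
    simpa [Matrix.mul_apply] using h
  have hle : R i i * R i i ≤ ∑ j, R j i * R j i :=
    Finset.single_le_sum (fun j _ => mul_self_nonneg (R j i)) (Finset.mem_univ i)
  nlinarith [hle, h']

/-- The key inequality: `∑ dᵢ Rᵢᵢ ≤ ∑ dᵢ` for a rotation `R`, when `d₁ ⩾ d₂ ⩾ |d₃|`. -/
lemma SO3_key_ineq (R : Mat3) (hR : R ∈ SO3) (d : Fin 3 → ℝ)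
    (hd1 : d 1 ≤ d 0) (hd2 : |d 2| ≤ d 1) :
    d 0 * R 0 0 + d 1 * R 1 1 + d 2 * R 2 2 ≤ d 0 + d 1 + d 2 := by
  have S_mem : (Matrix.diagonal ![(-1 : ℝ), -1, 1]) ∈ SO3 := by
    constructor
    · rw [Matrix.diagonal_transpose, Matrix.diagonal_mul_diagonal]
      ext i j
      fin_cases i <;> fin_cases j <;> simp [Matrix.diagonal, Matrix.one_apply]
    · simp [Matrix.det_diagonal, Fin.prod_univ_three]
  have hSR := SO3_trace_ge_neg_one _ (SO3_mul' S_mem hR)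
  have htr : (Matrix.diagonal ![(-1 : ℝ), -1, 1] * R).trace
      = -R 0 0 + -R 1 1 + R 2 2 := by
    simp [Matrix.trace, Matrix.diag, Matrix.mul_apply, Matrix.diagonal,
      Fin.sum_univ_three]
  rw [htr] at hSR
  have h00 := SO3_diag_le_one R hR 0
  have h22 := SO3_diag_le_one R hR 2
  have hd1' : 0 ≤ d 1 := le_trans (abs_nonneg _) hd2
  have hd2' : -d 1 ≤ d 2 := neg_le_of_abs_le hd2
  nlinarith [mul_nonneg (by linarith : (0:ℝ) ≤ d 0 - d 1) (by linarith : (0:ℝ) ≤ 1 - R 0 0),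
    mul_nonneg hd1' (by linarith : (0:ℝ) ≤ 1 - R 0 0 - R 1 1 + R 2 2),
    mul_nonneg (by linarith : (0:ℝ) ≤ d 1 + d 2) (by linarith : (0:ℝ) ≤ 1 - R 2 2)]

lemma mdot_expand (X Y : Mat3) :
    mdot (X - Y) (X - Y) = mdot X X - 2 * mdot X Y + mdot Y Y := by
  have hYX : (Y * Xᵀ).trace = (X * Yᵀ).trace := by
    rw [← Matrix.trace_transpose (X * Yᵀ), Matrix.transpose_mul, Matrix.transpose_transpose]
  unfold mdot
  rw [Matrix.transpose_sub, Matrix.sub_mul, Matrix.mul_sub, Matrix.mul_sub]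
  rw [Matrix.trace_sub, Matrix.trace_sub, Matrix.trace_sub, hYX]
  ring

lemma mdot_self_SO3 {A : Mat3} (hA : A ∈ SO3) : mdot A A = 3 / 2 := by
  unfold mdot
  rw [SO3_mul_transpose' hA, Matrix.trace_one]
  norm_num

lemma mnorm_mul_left_right {P Q : Mat3} (hP : P ∈ SO3) (hQ : Q ∈ SO3) (M : Mat3) :
    mnorm (P * M * Q) = mnorm M := by
  unfold mnorm; congr 1
  unfold mdot; congr 1
  have h1 : (P * M * Q) * (P * M * Q)ᵀ = P * (M * Mᵀ) * Pᵀ := by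
    rw [Matrix.transpose_mul, Matrix.transpose_mul]
    calc P * M * Q * (Qᵀ * (Mᵀ * Pᵀ)) = P * M * (Q * Qᵀ) * (Mᵀ * Pᵀ) := by noncomm_ring
    _ = P * (M * Mᵀ) * Pᵀ := by rw [SO3_mul_transpose' hQ, mul_one]; noncomm_ring
  rw [h1, Matrix.trace_mul_comm (P * (M * Mᵀ)) Pᵀ, ← mul_assoc, hP.1, one_mul]

lemma trace_diagonal_mul3 (d : Fin 3 → ℝ) (R : Mat3) :
    (Matrix.diagonal d * R).trace = d 0 * R 0 0 + d 1 * R 1 1 + d 2 * R 2 2 := by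
  simp [Matrix.trace, Matrix.diag, Matrix.mul_apply, Matrix.diagonal, Fin.sum_univ_three]

/-- If `J = P D Q` is a special singular value decomposition of `J` (`P, Q ∈ SO₃(ℝ)`,
`D = diag(d₁,d₂,d₃)` with `d₁ ⩾ d₂ ⩾ |d₃|`), then `min_{A ∈ SO₃(ℝ)} ∥J − A∥` is attained
at `A = PQ` and equals `∥D − I₃∥`. -/
theorem ssvd_min_dist_to_SO3 (J P Q : Mat3) (d : Fin 3 → ℝ)
    (hP : P ∈ SO3) (hQ : Q ∈ SO3) (hd1 : d 1 ≤ d 0) (hd2 : |d 2| ≤ d 1)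
    (hJ : J = P * Matrix.diagonal d * Q) :
    (∀ A ∈ SO3, mnorm (J - P * Q) ≤ mnorm (J - A)) ∧
    mnorm (J - P * Q) = mnorm (Matrix.diagonal d - 1) := by
  have hPQ : P * Q ∈ SO3 := SO3_mul' hP hQ
  -- `mdot J A ≤ (d 0 + d 1 + d 2)/2` for every `A ∈ SO3`
  have hbound : ∀ A ∈ SO3, mdot J A ≤ (d 0 + d 1 + d 2) / 2 := by
    intro A hA
    have hR : Q * Aᵀ * P ∈ SO3 := SO3_mul' (SO3_mul' hQ (SO3_transpose' hA)) hP
    have h1 : J * Aᵀ = P * (Matrix.diagonal d * (Q * Aᵀ)) := by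
      rw [hJ]; noncomm_ring
    have h2 : (J * Aᵀ).trace = (Matrix.diagonal d * (Q * Aᵀ * P)).trace := by
      rw [h1, Matrix.trace_mul_comm P (Matrix.diagonal d * (Q * Aᵀ)), mul_assoc,
        mul_assoc]
    have h3 := SO3_key_ineq _ hR d hd1 hd2
    rw [trace_diagonal_mul3] at h2
    unfold mdot
    rw [h2]
    set R := Q * Aᵀ * P
    linarith
  -- `mdot J (P*Q) = (d 0 + d 1 + d 2)/2` exactly
  have hexact : mdot J (P * Q) = (d 0 + d 1 + d 2) / 2 := by
    have h1 : J * (P * Q)ᵀ = P * Matrix.diagonal d * Pᵀ := by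
      rw [hJ, Matrix.transpose_mul]
      calc P * Matrix.diagonal d * Q * (Qᵀ * Pᵀ)
          = P * Matrix.diagonal d * (Q * Qᵀ) * Pᵀ := by noncomm_ring
      _ = P * Matrix.diagonal d * Pᵀ := by rw [SO3_mul_transpose' hQ, mul_one]
    have h2 : (J * (P * Q)ᵀ).trace = (Matrix.diagonal d).trace := by
      rw [h1, Matrix.trace_mul_comm (P * Matrix.diagonal d) Pᵀ, ← mul_assoc, hP.1,
        one_mul]
    unfold mdot
    rw [h2, Matrix.trace_diagonal, Fin.sum_univ_three]
    ring
  constructor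
  · intro A hA
    apply Real.sqrt_le_sqrt
    rw [mdot_expand, mdot_expand, mdot_self_SO3 hA, mdot_self_SO3 hPQ]
    have := hbound A hA
    linarith
  · have h : J - P * Q = P * (Matrix.diagonal d - 1) * Q := by
      rw [hJ]; noncomm_ring
    rw [h, mnorm_mul_left_right hP hQ]
end

section
/- Let ρ > 0 and V(J) = ½∥J∥² − ρ ln Z(J) on M₃(ℝ). Then V is twice differentiable, its second derivative satisfies, for all J, H ∈ M₃(ℝ), D²V(J)(H,H) = ∥H∥² − ρ ∫_{SO₃(ℝ)} ((A − 𝒥[M_J])·H)² M_J(A) dμ(A), and consequently D²V(J)(H,H) < ∥H∥² for every H ≠ 0 (all eigenvalues of the Hessian of V are strictly less than 1). -/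
/-!
Write `V = ½‖·‖² − ρ Λ` with `Λ = log Z` the log-partition function of the exponential
family `exp (J·A) dμ(A)`. Since `μ` lives on the bounded set `SO₃(ℝ)`, one may differentiate
twice under the integral sign, and `D²Λ(J)(H,H)` is the variance of `A ↦ A·H` under the tilted
probability measure `M_J dμ`. As `M_J > 0`, this variance vanishes only if `A·H` is `μ`-a.e.
constant, and left invariance of `μ` under the diagonal sign matrices and a cyclic permutation
matrix then forces `A Hᵀ = 0` for some rotation `A`, i.e. `H = 0`.
-/

open Matrix MeasureTheory

instance : MeasurableSpace Mat3 := inferInstanceAs (MeasurableSpace (Fin 3 → Fin 3 → ℝ))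

attribute [local instance] Matrix.normedAddCommGroup Matrix.normedSpace

/-- `μ` is the Haar probability measure of `SO₃(ℝ)`, viewed as a measure on `M₃(ℝ)`. -/
def IsHaarSO3 (μ : Measure Mat3) : Prop :=
  IsProbabilityMeasure μ ∧ μ SO3ᶜ = 0 ∧
    ∀ P ∈ SO3, Measure.map (fun A => P * A) μ = μ

/-- The normalization constant `Z(J) = ∫ exp(J·A) dμ(A)`. -/
noncomputable def Z (μ : Measure Mat3) (J : Mat3) : ℝ := ∫ A, Real.exp (mdot J A) ∂μ

/-- The generalized von Mises density `M_J(A) = exp(J·A)/Z(J)`. -/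
noncomputable def vonMises (μ : Measure Mat3) (J : Mat3) (A : Mat3) : ℝ :=
  Real.exp (mdot J A) / Z μ J

/-- The first moment `𝒥[f] = ∫ A f(A) dμ(A)`, taken entrywise. -/
noncomputable def Jcal (μ : Measure Mat3) (f : Mat3 → ℝ) : Mat3 :=
  Matrix.of fun i j => ∫ A, f A * A i j ∂μ

/-- The potential `V(J) = ½∥J∥² − ρ ln Z(J)`. -/
noncomputable def V (μ : Measure Mat3) (ρ : ℝ) (J : Mat3) : ℝ :=
  (1 / 2) * mdot J J - ρ * Real.log (Z μ J)

section LogPartition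

variable {α E F : Type*} [MeasurableSpace α] {μ : Measure α}
  [NormedAddCommGroup E] [NormedSpace ℝ E] [NormedAddCommGroup F] [NormedSpace ℝ F]
  {φ : α → E →L[ℝ] ℝ} {C : ℝ}

lemma exp_apply_le_exp_mul_norm {ψ : E →L[ℝ] ℝ} (hψ : ‖ψ‖ ≤ C) (J : E) :
    Real.exp (ψ J) ≤ Real.exp (C * ‖J‖) :=
  Real.exp_le_exp.2 <| calc
    ψ J ≤ ‖ψ J‖ := Real.le_norm_self _
    _ ≤ ‖ψ‖ * ‖J‖ := ψ.le_opNorm J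
    _ ≤ C * ‖J‖ := by gcongr

lemma aestronglyMeasurable_exp_apply_smul {g : α → F}
    (hφm : AEStronglyMeasurable φ μ) (hgm : AEStronglyMeasurable g μ) (J : E) :
    AEStronglyMeasurable (fun a => Real.exp (φ a J) • g a) μ :=
  (Real.continuous_exp.comp_aestronglyMeasurable
    ((ContinuousLinearMap.apply ℝ ℝ J).continuous.comp_aestronglyMeasurable hφm)).smul hgm

lemma aestronglyMeasurable_smulRight {g : α → F} (hφm : AEStronglyMeasurable φ μ)
    (hgm : AEStronglyMeasurable g μ) : AEStronglyMeasurable (fun a => (φ a).smulRight (g a)) μ :=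
  (ContinuousLinearMap.smulRightL ℝ E F).continuous₂.comp_aestronglyMeasurable₂ hφm hgm

lemma norm_exp_apply_smul_le {ψ : E →L[ℝ] ℝ} {v : F} {D : ℝ} (hψ : ‖ψ‖ ≤ C) (hv : ‖v‖ ≤ D)
    (J : E) : ‖Real.exp (ψ J) • v‖ ≤ Real.exp (C * ‖J‖) * D := by
  rw [norm_smul, Real.norm_of_nonneg (Real.exp_pos _).le]
  exact mul_le_mul (exp_apply_le_exp_mul_norm hψ J) hv (norm_nonneg _) (Real.exp_pos _).le

lemma integrable_exp_apply_smul [IsFiniteMeasure μ] {g : α → F} {D : ℝ}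
    (hφm : AEStronglyMeasurable φ μ) (hφ : ∀ᵐ a ∂μ, ‖φ a‖ ≤ C)
    (hgm : AEStronglyMeasurable g μ) (hg : ∀ᵐ a ∂μ, ‖g a‖ ≤ D) (J : E) :
    Integrable (fun a => Real.exp (φ a J) • g a) μ := by
  refine .of_bound (aestronglyMeasurable_exp_apply_smul hφm hgm J) (Real.exp (C * ‖J‖) * D) ?_
  filter_upwards [hφ, hg] with a ha hga using norm_exp_apply_smul_le ha hga J

lemma hasFDerivAt_integral_exp_apply_smul [IsFiniteMeasure μ] [CompleteSpace F]
    {g : α → F} {D : ℝ}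
    (hφm : AEStronglyMeasurable φ μ) (hφ : ∀ᵐ a ∂μ, ‖φ a‖ ≤ C)
    (hgm : AEStronglyMeasurable g μ) (hg : ∀ᵐ a ∂μ, ‖g a‖ ≤ D) (J : E) :
    HasFDerivAt (fun J => ∫ a, Real.exp (φ a J) • g a ∂μ)
      (∫ a, Real.exp (φ a J) • (φ a).smulRight (g a) ∂μ) J := by
  refine hasFDerivAt_integral_of_dominated_of_fderiv_le (Metric.ball_mem_nhds J one_pos)
    (F' := fun K a => Real.exp (φ a K) • (φ a).smulRight (g a))
    (.of_forall fun K => aestronglyMeasurable_exp_apply_smul hφm hgm K)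
    (integrable_exp_apply_smul hφm hφ hgm hg J)
    (aestronglyMeasurable_exp_apply_smul hφm (aestronglyMeasurable_smulRight hφm hgm) J)
    (bound := fun _ => Real.exp (C * (‖J‖ + 1)) * (C * D))
    ?_ (integrable_const _) (.of_forall fun a K _ => ?_)
  · filter_upwards [hφ, hg] with a ha hga K hK
    have hK : ‖K‖ ≤ ‖J‖ + 1 := by
      linarith [norm_le_norm_add_norm_sub' K J, mem_ball_iff_norm.1 hK]
    have hC : 0 ≤ C := (norm_nonneg _).trans ha
    have hD : 0 ≤ D := (norm_nonneg _).trans hga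
    calc ‖Real.exp (φ a K) • (φ a).smulRight (g a)‖ ≤ Real.exp (C * ‖K‖) * (C * D) :=
          norm_exp_apply_smul_le ha
            (((φ a).norm_smulRight_apply (g a)).trans_le (by gcongr)) K
      _ ≤ _ := by gcongr
  · refine (((Real.hasDerivAt_exp _).comp_hasFDerivAt K (φ a).hasFDerivAt).smul_const
      (g a)).congr_fderiv ?_
    ext x
    simp [smul_smul]

noncomputable def partitionFunction (μ : Measure α) (φ : α → E →L[ℝ] ℝ) (J : E) : ℝ :=
  ∫ a, Real.exp (φ a J) ∂μ

noncomputable def tiltedDensity (μ : Measure α) (φ : α → E →L[ℝ] ℝ) (J : E) (a : α) : ℝ :=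
  Real.exp (φ a J) / partitionFunction μ φ J

lemma integrable_exp_apply [IsFiniteMeasure μ] (hφm : AEStronglyMeasurable φ μ)
    (hφ : ∀ᵐ a ∂μ, ‖φ a‖ ≤ C) (J : E) : Integrable (fun a => Real.exp (φ a J)) μ := by
  simpa using integrable_exp_apply_smul hφm hφ aestronglyMeasurable_const
    (.of_forall fun _ => norm_one.le : ∀ᵐ _ ∂μ, ‖(1 : ℝ)‖ ≤ 1) J

lemma partitionFunction_pos [IsFiniteMeasure μ] [NeZero μ] (hφm : AEStronglyMeasurable φ μ)
    (hφ : ∀ᵐ a ∂μ, ‖φ a‖ ≤ C) (J : E) : 0 < partitionFunction μ φ J :=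
  integral_exp_pos (integrable_exp_apply hφm hφ J)

lemma tiltedDensity_pos [IsFiniteMeasure μ] [NeZero μ] (hφm : AEStronglyMeasurable φ μ)
    (hφ : ∀ᵐ a ∂μ, ‖φ a‖ ≤ C) (J : E) (a : α) : 0 < tiltedDensity μ φ J a :=
  div_pos (Real.exp_pos _) (partitionFunction_pos hφm hφ J)

lemma integral_tiltedDensity [IsFiniteMeasure μ] [NeZero μ] (hφm : AEStronglyMeasurable φ μ)
    (hφ : ∀ᵐ a ∂μ, ‖φ a‖ ≤ C) (J : E) : ∫ a, tiltedDensity μ φ J a ∂μ = 1 :=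
  (integral_div _ _).trans (div_self (partitionFunction_pos hφm hφ J).ne')

lemma integrable_mul_tiltedDensity [IsFiniteMeasure μ] {g : α → ℝ} {D : ℝ}
    (hφm : AEStronglyMeasurable φ μ) (hφ : ∀ᵐ a ∂μ, ‖φ a‖ ≤ C)
    (hgm : AEStronglyMeasurable g μ) (hg : ∀ᵐ a ∂μ, ‖g a‖ ≤ D) (J : E) :
    Integrable (fun a => g a * tiltedDensity μ φ J a) μ := by
  refine ((integrable_exp_apply_smul hφm hφ hgm hg J).div_const
    (partitionFunction μ φ J)).congr (.of_forall fun a => ?_)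
  simp only [tiltedDensity, smul_eq_mul]
  ring

lemma integrable_sub_pow_mul_tiltedDensity [IsFiniteMeasure μ] (hφm : AEStronglyMeasurable φ μ)
    (hφ : ∀ᵐ a ∂μ, ‖φ a‖ ≤ C) (J H : E) (m : ℝ) (n : ℕ) :
    Integrable (fun a => (φ a H - m) ^ n * tiltedDensity μ φ J a) μ := by
  refine integrable_mul_tiltedDensity hφm hφ (D := (C * ‖H‖ + ‖m‖) ^ n) ?_ ?_ J
  · exact (((ContinuousLinearMap.apply ℝ ℝ H).continuous.comp_aestronglyMeasurable hφm).sub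
      aestronglyMeasurable_const).pow n
  filter_upwards [hφ] with a ha
  rw [norm_pow]
  gcongr
  calc ‖φ a H - m‖ ≤ ‖φ a H‖ + ‖m‖ := norm_sub_le _ _
    _ ≤ C * ‖H‖ + ‖m‖ := by gcongr; exact (φ a).le_of_opNorm_le ha H

lemma hasFDerivAt_partitionFunction [IsFiniteMeasure μ] (hφm : AEStronglyMeasurable φ μ)
    (hφ : ∀ᵐ a ∂μ, ‖φ a‖ ≤ C) (J : E) :
    HasFDerivAt (partitionFunction μ φ) (∫ a, Real.exp (φ a J) • φ a ∂μ) J := by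
  have smulRight_one (ψ : E →L[ℝ] ℝ) : ψ.smulRight (1 : ℝ) = ψ := by ext; simp
  have h := hasFDerivAt_integral_exp_apply_smul hφm hφ aestronglyMeasurable_const
    (.of_forall fun _ => norm_one.le : ∀ᵐ _ ∂μ, ‖(1 : ℝ)‖ ≤ 1) J
  simp only [smul_eq_mul, mul_one, smulRight_one] at h
  exact h

lemma integral_sub_integral_sq_mul {w f : α → ℝ} (hw : Integrable w μ)
    (hfw : Integrable (fun a => f a * w a) μ) (hf2w : Integrable (fun a => f a ^ 2 * w a) μ)
    (hw1 : ∫ a, w a ∂μ = 1) :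
    ∫ a, (f a - ∫ b, f b * w b ∂μ) ^ 2 * w a ∂μ =
      ∫ a, f a ^ 2 * w a ∂μ - (∫ a, f a * w a ∂μ) ^ 2 := by
  set m := ∫ b, f b * w b ∂μ
  have expand (a : α) :
      (f a - m) ^ 2 * w a = f a ^ 2 * w a - 2 * m * (f a * w a) + m ^ 2 * w a := by
    ring
  simp_rw [expand]
  rw [integral_add (f := fun a => f a ^ 2 * w a - 2 * m * (f a * w a))
      (hf2w.sub (hfw.const_mul _)) (hw.const_mul _),
    integral_sub hf2w (hfw.const_mul _), integral_const_mul, integral_const_mul, hw1]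
  ring

lemma integral_mul_tiltedDensity (g : α → ℝ) (J : E) :
    ∫ a, g a * tiltedDensity μ φ J a ∂μ =
      (∫ a, Real.exp (φ a J) * g a ∂μ) / partitionFunction μ φ J := by
  rw [← integral_div]
  congr 1 with a
  rw [tiltedDensity]
  ring

lemma hasFDerivAt_log_partitionFunction [IsFiniteMeasure μ] [NeZero μ]
    (hφm : AEStronglyMeasurable φ μ) (hφ : ∀ᵐ a ∂μ, ‖φ a‖ ≤ C) (J : E) :
    HasFDerivAt (fun J => Real.log (partitionFunction μ φ J))
      ((partitionFunction μ φ J)⁻¹ • ∫ a, Real.exp (φ a J) • φ a ∂μ) J :=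
  (hasFDerivAt_partitionFunction hφm hφ J).log (partitionFunction_pos hφm hφ J).ne'

lemma hasFDerivAt_fderiv_log_partitionFunction [IsFiniteMeasure μ] [NeZero μ]
    (hφm : AEStronglyMeasurable φ μ) (hφ : ∀ᵐ a ∂μ, ‖φ a‖ ≤ C) (J : E) :
    HasFDerivAt (fderiv ℝ fun J => Real.log (partitionFunction μ φ J))
      ((partitionFunction μ φ J)⁻¹ • (∫ a, Real.exp (φ a J) • (φ a).smulRight (φ a) ∂μ) +
        (-(partitionFunction μ φ J ^ 2)⁻¹ • ∫ a, Real.exp (φ a J) • φ a ∂μ).smulRight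
          (∫ a, Real.exp (φ a J) • φ a ∂μ)) J := by
  rw [funext fun J => (hasFDerivAt_log_partitionFunction hφm hφ J).fderiv]
  have hZ := hasFDerivAt_partitionFunction hφm hφ J
  exact ((hasDerivAt_inv (partitionFunction_pos hφm hφ J).ne').comp_hasFDerivAt J hZ).smul
    (hasFDerivAt_integral_exp_apply_smul hφm hφ hφm hφ J)

lemma differentiable_log_partitionFunction [IsFiniteMeasure μ] [NeZero μ]
    (hφm : AEStronglyMeasurable φ μ) (hφ : ∀ᵐ a ∂μ, ‖φ a‖ ≤ C) :
    Differentiable ℝ fun J => Real.log (partitionFunction μ φ J) :=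
  fun J => (hasFDerivAt_log_partitionFunction hφm hφ J).differentiableAt

lemma differentiable_fderiv_log_partitionFunction [IsFiniteMeasure μ] [NeZero μ]
    (hφm : AEStronglyMeasurable φ μ) (hφ : ∀ᵐ a ∂μ, ‖φ a‖ ≤ C) :
    Differentiable ℝ (fderiv ℝ fun J => Real.log (partitionFunction μ φ J)) :=
  fun J => (hasFDerivAt_fderiv_log_partitionFunction hφm hφ J).differentiableAt

theorem fderiv_fderiv_log_partitionFunction_apply [IsFiniteMeasure μ] [NeZero μ]
    (hφm : AEStronglyMeasurable φ μ) (hφ : ∀ᵐ a ∂μ, ‖φ a‖ ≤ C) (J H : E) :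
    fderiv ℝ (fderiv ℝ fun J => Real.log (partitionFunction μ φ J)) J H H =
      ∫ a, (φ a H - ∫ b, φ b H * tiltedDensity μ φ J b ∂μ) ^ 2 * tiltedDensity μ φ J a ∂μ := by
  have hw := integrable_sub_pow_mul_tiltedDensity hφm hφ J H 0
  simp only [sub_zero] at hw
  rw [integral_sub_integral_sq_mul (by simpa using hw 0) (by simpa using hw 1) (hw 2)
    (integral_tiltedDensity hφm hφ J), integral_mul_tiltedDensity, integral_mul_tiltedDensity,
    (hasFDerivAt_fderiv_log_partitionFunction hφm hφ J).fderiv]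
  have hL1 : (∫ a, Real.exp (φ a J) • φ a ∂μ) H = ∫ a, Real.exp (φ a J) * φ a H ∂μ :=
    ContinuousLinearMap.integral_apply (integrable_exp_apply_smul hφm hφ hφm hφ J) H
  have hL2 : (∫ a, Real.exp (φ a J) • (φ a).smulRight (φ a) ∂μ) H H =
      ∫ a, Real.exp (φ a J) * φ a H ^ 2 ∂μ := by
    have hint := integrable_exp_apply_smul (g := fun a => (φ a).smulRight (φ a)) (D := C * C)
      hφm hφ (aestronglyMeasurable_smulRight hφm hφm)
      (hφ.mono fun a ha => ((φ a).norm_smulRight_apply (φ a)).trans_le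
        (mul_le_mul ha ha (norm_nonneg _) ((norm_nonneg _).trans ha))) J
    rw [ContinuousLinearMap.integral_apply hint H,
      ContinuousLinearMap.integral_apply (hint.apply_continuousLinearMap H) H]
    simp [sq]
  simp only [_root_.add_apply, _root_.smul_apply, ContinuousLinearMap.smulRight_apply, hL1, hL2,
    smul_eq_mul]
  field_simp
  ring

lemma integral_sub_sq_mul_tiltedDensity_pos [IsFiniteMeasure μ] [NeZero μ]
    (hφm : AEStronglyMeasurable φ μ) (hφ : ∀ᵐ a ∂μ, ‖φ a‖ ≤ C) (J H : E) (m : ℝ)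
    (h : ¬∀ᵐ a ∂μ, φ a H = m) :
    0 < ∫ a, (φ a H - m) ^ 2 * tiltedDensity μ φ J a ∂μ := by
  have hnonneg : 0 ≤ fun a => (φ a H - m) ^ 2 * tiltedDensity μ φ J a :=
    fun a => mul_nonneg (sq_nonneg _) (tiltedDensity_pos hφm hφ J a).le
  refine (integral_nonneg hnonneg).lt_of_ne fun h0 => h ?_
  filter_upwards [(integral_eq_zero_iff_of_nonneg hnonneg
    (integrable_sub_pow_mul_tiltedDensity hφm hφ J H m 2)).1 h0.symm] with a ha
  have := (mul_eq_zero.1 ha).resolve_right (tiltedDensity_pos hφm hφ J a).ne'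
  exact sub_eq_zero.1 (pow_eq_zero_iff two_ne_zero |>.1 this)

end LogPartition

/- `Matrix.normedAddCommGroup` induces the matrix topology only up to unfolding; making its
uniformity syntactically `Matrix.instUniformSpace` lets instance search see that spaces of
continuous linear maps on `Mat3` are normed, and that `Mat3` is a Borel space. -/
noncomputable instance mat3NormedAddCommGroup : NormedAddCommGroup Mat3 :=
  { (Matrix.normedAddCommGroup : NormedAddCommGroup Mat3) with
    toMetricSpace :=
      (Matrix.normedAddCommGroup : NormedAddCommGroup Mat3).toMetricSpace.replaceUniformity
        (U := Matrix.instUniformSpace (Fin 3) (Fin 3) ℝ) rfl }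

noncomputable instance mat3NormedSpace : NormedSpace ℝ Mat3 :=
  { toModule := Matrix.module
    norm_smul_le := (Matrix.normedSpace : NormedSpace ℝ Mat3).norm_smul_le }

instance mat3BorelSpace : BorelSpace Mat3 := inferInstanceAs (BorelSpace (Fin 3 → Fin 3 → ℝ))

lemma mdot_comm (A B : Mat3) : mdot A B = mdot B A := by
  rw [mdot, mdot, ← trace_transpose, transpose_mul, transpose_transpose]

lemma mdot_eq_sum (A B : Mat3) : mdot A B = 1 / 2 * ∑ i, ∑ j, A i j * B i j := by
  simp [mdot, trace, mul_apply]

lemma mdot_sub_left (A B H : Mat3) : mdot (A - B) H = mdot A H - mdot B H := by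
  simp [mdot, Matrix.sub_mul, mul_sub]

noncomputable def mdotL : Mat3 →L[ℝ] Mat3 →L[ℝ] ℝ :=
  (LinearMap.mk₂ ℝ mdot (fun _ _ _ => by simp [mdot, Matrix.add_mul, mul_add])
    (fun _ _ _ => by simp [mdot, mul_left_comm]) (fun _ _ _ => by simp [mdot, mul_add])
    (fun _ _ _ => by simp [mdot, mul_left_comm])).toContinuousBilinearMap

@[simp] lemma mdotL_apply (A B : Mat3) : mdotL A B = mdot A B := rfl

lemma hasFDerivAt_half_mdot_self (J : Mat3) :
    HasFDerivAt (fun J => 1 / 2 * mdot J J) (mdotL J) J := by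
  refine ((mdotL.hasFDerivAt.clm_apply (hasFDerivAt_id J)).const_mul (1 / 2)).congr_fderiv ?_
  ext H
  change 1 / 2 * (mdot J H + mdot H J) = mdot J H
  rw [mdot_comm H J]
  ring

lemma norm_le_one_of_mem_SO3 {A : Mat3} (hA : A ∈ SO3) : ‖A‖ ≤ 1 := by
  refine (norm_le_iff zero_le_one).2 fun i j => ?_
  have hcol : ∑ k, A k j * A k j = 1 := by simpa [mul_apply] using congrFun (congrFun hA.1 j) j
  rw [Real.norm_eq_abs, abs_le_one_iff_mul_self_le_one, ← hcol]
  exact Finset.single_le_sum (f := fun k => A k j * A k j) (fun k _ => mul_self_nonneg _)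
    (Finset.mem_univ i)

lemma diagonal_mem_SO3 {d : Fin 3 → ℝ} (hd : ∀ i, d i * d i = 1) (hdet : d 0 * d 1 * d 2 = 1) :
    diagonal d ∈ SO3 := by
  refine ⟨?_, by simpa [det_diagonal, Fin.prod_univ_three] using hdet⟩
  rw [diagonal_transpose, diagonal_mul_diagonal]
  simp [hd]

def cycleMatrix : Mat3 := !![0, 1, 0; 0, 0, 1; 1, 0, 0]

lemma cycleMatrix_mem_SO3 : cycleMatrix ∈ SO3 := by
  refine ⟨?_, by simp [cycleMatrix, det_fin_three]⟩
  ext i j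
  fin_cases i <;> fin_cases j <;> simp [cycleMatrix, mul_apply, Fin.sum_univ_three]

lemma diag_eq_zero_of_trace_diagonal_mul_eq {B : Mat3} {c : ℝ} (h0 : B.trace = c)
    (h1 : (diagonal ![1, -1, -1] * B).trace = c) (h2 : (diagonal ![-1, 1, -1] * B).trace = c)
    (h3 : (diagonal ![-1, -1, 1] * B).trace = c) (i : Fin 3) : B i i = 0 := by
  have htrace (d : Fin 3 → ℝ) :
      (diagonal d * B).trace = d 0 * B 0 0 + d 1 * B 1 1 + d 2 * B 2 2 := by
    simp [trace_fin_three, diagonal_mul]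
  simp only [htrace, trace_fin_three, cons_val, one_mul, neg_mul] at h0 h1 h2 h3
  fin_cases i <;> dsimp <;> linarith

lemma cycleMatrix_mul_apply (B : Mat3) (i j : Fin 3) : (cycleMatrix * B) i j = B (i + 1) j := by
  fin_cases i <;> simp [cycleMatrix, mul_apply, Fin.sum_univ_three]

lemma eq_zero_of_diag_eq_zero_of_cycleMatrix_mul {B : Mat3} (h0 : ∀ i, B i i = 0)
    (h1 : ∀ i, (cycleMatrix * B) i i = 0) (h2 : ∀ i, (cycleMatrix * (cycleMatrix * B)) i i = 0) :
    B = 0 := by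
  simp only [cycleMatrix_mul_apply] at h1 h2
  ext i j
  obtain ⟨k, rfl⟩ : ∃ k, i = j + k := ⟨i - j, (add_sub_cancel j i).symm⟩
  fin_cases k
  · simpa using h0 j
  · exact h1 j
  · simpa [add_assoc, one_add_one_eq_two] using h2 j

namespace IsHaarSO3

variable {μ : Measure Mat3}

lemma ae_mem (hμ : IsHaarSO3 μ) : ∀ᵐ A ∂μ, A ∈ SO3 := ae_iff.2 hμ.2.1

lemma ae_mul_left (hμ : IsHaarSO3 μ) {P : Mat3} (hP : P ∈ SO3) {p : Mat3 → Prop}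
    (h : ∀ᵐ A ∂μ, p A) : ∀ᵐ A ∂μ, p (P * A) := by
  rw [← hμ.2.2 P hP] at h
  exact ae_of_ae_map (continuous_const.matrix_mul continuous_id).aemeasurable h

lemma ae_norm_mdotL_le (hμ : IsHaarSO3 μ) : ∀ᵐ A ∂μ, ‖mdotL A‖ ≤ ‖mdotL‖ :=
  hμ.ae_mem.mono fun A hA => (mdotL.le_opNorm A).trans
    (mul_le_of_le_one_right (norm_nonneg _) (norm_le_one_of_mem_SO3 hA))

/- Invariance under the diagonal sign matrices kills the diagonal of `A Hᵀ`, and invariance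
under the cyclic permutation matrix moves every other entry onto the diagonal. -/
lemma eq_zero_of_ae_mdot_eq (hμ : IsHaarSO3 μ) {H : Mat3} {c : ℝ}
    (h : ∀ᵐ A ∂μ, mdot A H = c) : H = 0 := by
  have := hμ.1
  have hsign {d : Fin 3 → ℝ} (hd : ∀ i, d i * d i = 1) (hdet : d 0 * d 1 * d 2 = 1) :=
    hμ.ae_mul_left (diagonal_mem_SO3 hd hdet) h
  have hdiag : ∀ᵐ A ∂μ, ∀ i, (A * Hᵀ) i i = 0 := by
    filter_upwards [h, hsign (d := ![1, -1, -1]) (fun i => by fin_cases i <;> simp) (by simp),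
      hsign (d := ![-1, 1, -1]) (fun i => by fin_cases i <;> simp) (by simp),
      hsign (d := ![-1, -1, 1]) (fun i => by fin_cases i <;> simp) (by simp)] with A h0 h1 h2 h3
    simp only [mdot, Matrix.mul_assoc] at h0 h1 h2 h3
    exact diag_eq_zero_of_trace_diagonal_mul_eq (by linarith) (by linarith) (by linarith)
      (by linarith)
  have hcycle := hμ.ae_mul_left cycleMatrix_mem_SO3 hdiag
  obtain ⟨A, hA, h0, h1, h2⟩ :=
    (hμ.ae_mem.and (hdiag.and (hcycle.and (hμ.ae_mul_left cycleMatrix_mem_SO3 hcycle)))).exists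
  simp only [Matrix.mul_assoc] at h1 h2
  rw [← transpose_eq_zero, ← Matrix.one_mul Hᵀ, ← hA.1, Matrix.mul_assoc,
    eq_zero_of_diag_eq_zero_of_cycleMatrix_mul h0 h1 h2, Matrix.mul_zero]

end IsHaarSO3

section Potential

variable {μ : Measure Mat3}

lemma Z_eq_partitionFunction : Z μ = partitionFunction μ mdotL :=
  funext fun J => integral_congr_ae (.of_forall fun A => by simp [mdot_comm])

lemma vonMises_eq_tiltedDensity : vonMises μ = tiltedDensity μ mdotL := by
  funext J A
  rw [vonMises, tiltedDensity, ← Z_eq_partitionFunction, mdotL_apply, mdot_comm]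

lemma mdot_Jcal {f : Mat3 → ℝ} (hf : ∀ i j, Integrable (fun A => f A * A i j) μ) (H : Mat3) :
    mdot (Jcal μ f) H = ∫ A, mdot A H * f A ∂μ := calc
  mdot (Jcal μ f) H = ∑ i, ∑ j, ∫ A, f A * A i j * (H i j / 2) ∂μ := by
    simp only [mdot_eq_sum, Jcal, of_apply, integral_mul_const, Finset.mul_sum]
    exact Finset.sum_congr rfl fun i _ => Finset.sum_congr rfl fun j _ => by ring
  _ = ∫ A, ∑ i, ∑ j, f A * A i j * (H i j / 2) ∂μ := by
    rw [integral_finsetSum _ fun i _ => integrable_finsetSum _ fun j _ => (hf i j).mul_const _]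
    exact Finset.sum_congr rfl fun i _ =>
      (integral_finsetSum _ fun j _ => (hf i j).mul_const _).symm
  _ = ∫ A, mdot A H * f A ∂μ := by
    congr 1 with A
    simp only [mdot_eq_sum, Finset.mul_sum, Finset.sum_mul]
    exact Finset.sum_congr rfl fun i _ => Finset.sum_congr rfl fun j _ => by ring

lemma hasFDerivAt_V (hμ : IsHaarSO3 μ) (ρ : ℝ) (J : Mat3) :
    HasFDerivAt (V μ ρ)
      (mdotL J - ρ • fderiv ℝ (fun J => Real.log (partitionFunction μ mdotL J)) J) J := by
  have := hμ.1
  have hV : V μ ρ = fun J => 1 / 2 * mdot J J - ρ * Real.log (partitionFunction μ mdotL J) := by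
    funext J
    rw [V, Z_eq_partitionFunction]
  rw [hV]
  exact (hasFDerivAt_half_mdot_self J).sub ((differentiable_log_partitionFunction
    mdotL.continuous.aestronglyMeasurable hμ.ae_norm_mdotL_le J).hasFDerivAt.const_mul ρ)

lemma hasFDerivAt_fderiv_V (hμ : IsHaarSO3 μ) (ρ : ℝ) (J : Mat3) :
    HasFDerivAt (fderiv ℝ (V μ ρ))
      (mdotL - ρ • fderiv ℝ (fderiv ℝ fun J => Real.log (partitionFunction μ mdotL J)) J) J := by
  have := hμ.1
  rw [funext fun J => (hasFDerivAt_V hμ ρ J).fderiv]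
  exact mdotL.hasFDerivAt.sub ((differentiable_fderiv_log_partitionFunction
    mdotL.continuous.aestronglyMeasurable hμ.ae_norm_mdotL_le J).hasFDerivAt.const_smul ρ)

lemma integral_mdot_sub_Jcal_sq_mul_vonMises_eq (hμ : IsHaarSO3 μ) (J H : Mat3) :
    ∫ A, (mdot (A - Jcal μ (vonMises μ J)) H) ^ 2 * vonMises μ J A ∂μ =
      ∫ A, (mdotL A H - ∫ B, mdotL B H * tiltedDensity μ mdotL J B ∂μ) ^ 2 *
        tiltedDensity μ mdotL J A ∂μ := by
  have := hμ.1
  have hentry (i j : Fin 3) : Integrable (fun A : Mat3 => vonMises μ J A * A i j) μ := by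
    rw [vonMises_eq_tiltedDensity]
    refine (integrable_mul_tiltedDensity mdotL.continuous.aestronglyMeasurable
      hμ.ae_norm_mdotL_le (continuous_id.matrix_elem i j).aestronglyMeasurable
      (hμ.ae_mem.mono fun A hA => (norm_entry_le_entrywise_sup_norm A).trans
        (norm_le_one_of_mem_SO3 hA)) J).congr (.of_forall fun A => mul_comm _ _)
  simp_rw [mdot_sub_left, mdot_Jcal hentry, vonMises_eq_tiltedDensity, mdotL_apply]

lemma fderiv_fderiv_V_apply (hμ : IsHaarSO3 μ) (ρ : ℝ) (J H : Mat3) :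
    fderiv ℝ (fderiv ℝ (V μ ρ)) J H H =
      mdot H H - ρ * ∫ A, (mdot (A - Jcal μ (vonMises μ J)) H) ^ 2 * vonMises μ J A ∂μ := by
  have := hμ.1
  rw [(hasFDerivAt_fderiv_V hμ ρ J).fderiv, integral_mdot_sub_Jcal_sq_mul_vonMises_eq hμ,
    ← fderiv_fderiv_log_partitionFunction_apply mdotL.continuous.aestronglyMeasurable
      hμ.ae_norm_mdotL_le]
  rfl

lemma integral_mdot_sub_Jcal_sq_mul_vonMises_pos (hμ : IsHaarSO3 μ) (J : Mat3) {H : Mat3}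
    (hH : H ≠ 0) : 0 < ∫ A, (mdot (A - Jcal μ (vonMises μ J)) H) ^ 2 * vonMises μ J A ∂μ := by
  have := hμ.1
  rw [integral_mdot_sub_Jcal_sq_mul_vonMises_eq hμ]
  exact integral_sub_sq_mul_tiltedDensity_pos mdotL.continuous.aestronglyMeasurable
    hμ.ae_norm_mdotL_le J H _ fun h => hH (hμ.eq_zero_of_ae_mdot_eq h)

end Potential

/-- `V` is twice differentiable, with
`D²V(J)(H,H) = ∥H∥² − ρ ∫ ((A − 𝒥[M_J])·H)² M_J(A) dμ(A)`; consequently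
`D²V(J)(H,H) < ∥H∥²` for every `H ≠ 0` (all eigenvalues of the Hessian are `< 1`). -/
theorem V_hessian (μ : Measure Mat3) (hμ : IsHaarSO3 μ) (ρ : ℝ) (hρ : 0 < ρ) :
    Differentiable ℝ (V μ ρ) ∧ Differentiable ℝ (fderiv ℝ (V μ ρ)) ∧
    (∀ J H : Mat3,
      fderiv ℝ (fderiv ℝ (V μ ρ)) J H H =
        mdot H H - ρ * ∫ A, (mdot (A - Jcal μ (vonMises μ J)) H) ^ 2 * vonMises μ J A ∂μ) ∧
    (∀ J H : Mat3, H ≠ 0 → fderiv ℝ (fderiv ℝ (V μ ρ)) J H H < mdot H H) := by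
  refine ⟨fun J => (hasFDerivAt_V hμ ρ J).differentiableAt,
    fun J => (hasFDerivAt_fderiv_V hμ ρ J).differentiableAt, fderiv_fderiv_V_apply hμ ρ,
    fun J H hH => ?_⟩
  rw [fderiv_fderiv_V_apply hμ ρ]
  linarith [mul_pos hρ (integral_mdot_sub_Jcal_sq_mul_vonMises_pos hμ J hH)]
end
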